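/- arXiv:1703.01957 — 3 statements merged into one kernel-verified Lean document; each statement's English description precedes it below -/
import Mathlib

section
/- Let V₁, V₂ : Δ(K) × Δ(L) → ℝ and suppose for each i and each (p,q), Vᵢ(p,q) = inf_{μ ∈ ℝ^{|K|}} (Ṽᵢ¹(μ,q) − pᵀμ) where Ṽᵢ¹(μ,q) = sup_{p' ∈ Δ(K)} (Vᵢ(p',q) + p'ᵀμ), and suppose the infima and suprema are attained. Then ‖V₁ − V₂‖_sup = ‖Ṽ₁¹ − Ṽ₂¹‖_sup, where the first sup-norm is over Δ(K) × Δ(L) and the second over ℝ^{|K|} × Δ(L). -/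
open Finset

/-- Lemma 4: the sup-norm of the difference of primal values equals the
sup-norm of the difference of type-1 dual values. -/
theorem stmt_3 {K L : Type*} [Fintype K] [Fintype L] [Nonempty K] [Nonempty L]
    (V₁ V₂ : (K → ℝ) → (L → ℝ) → ℝ)
    (h₁ : ∃ C : ℝ, ∀ p q, |V₁ p q| ≤ C) (h₂ : ∃ C : ℝ, ∀ p q, |V₂ p q| ≤ C)
    (Vd₁ Vd₂ : (K → ℝ) → (L → ℝ) → ℝ)
    (hmax₁ : ∀ (μ : K → ℝ), ∀ q ∈ stdSimplex ℝ L,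
      IsGreatest {x : ℝ | ∃ p ∈ stdSimplex ℝ K, x = V₁ p q + ∑ k, p k * μ k} (Vd₁ μ q))
    (hmax₂ : ∀ (μ : K → ℝ), ∀ q ∈ stdSimplex ℝ L,
      IsGreatest {x : ℝ | ∃ p ∈ stdSimplex ℝ K, x = V₂ p q + ∑ k, p k * μ k} (Vd₂ μ q))
    (hmin₁ : ∀ p ∈ stdSimplex ℝ K, ∀ q ∈ stdSimplex ℝ L,
      IsLeast {x : ℝ | ∃ μ : K → ℝ, x = Vd₁ μ q - ∑ k, p k * μ k} (V₁ p q))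
    (hmin₂ : ∀ p ∈ stdSimplex ℝ K, ∀ q ∈ stdSimplex ℝ L,
      IsLeast {x : ℝ | ∃ μ : K → ℝ, x = Vd₂ μ q - ∑ k, p k * μ k} (V₂ p q)) :
    sSup {x : ℝ | ∃ p ∈ stdSimplex ℝ K, ∃ q ∈ stdSimplex ℝ L, x = |V₁ p q - V₂ p q|}
      = sSup {x : ℝ | ∃ μ : K → ℝ, ∃ q ∈ stdSimplex ℝ L, x = |Vd₁ μ q - Vd₂ μ q|} := by

  classical
  obtain ⟨C₁, hC₁⟩ := h₁
  obtain ⟨C₂, hC₂⟩ := h₂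
  obtain ⟨p₀, hp₀⟩ : ∃ p, p ∈ stdSimplex ℝ K :=
    ⟨_, ite_eq_mem_stdSimplex ℝ (Classical.arbitrary K)⟩
  obtain ⟨q₀, hq₀⟩ : ∃ q, q ∈ stdSimplex ℝ L :=
    ⟨_, ite_eq_mem_stdSimplex ℝ (Classical.arbitrary L)⟩
  set A := {x : ℝ | ∃ p ∈ stdSimplex ℝ K, ∃ q ∈ stdSimplex ℝ L, x = |V₁ p q - V₂ p q|} with hA
  set B := {x : ℝ | ∃ μ : K → ℝ, ∃ q ∈ stdSimplex ℝ L, x = |Vd₁ μ q - Vd₂ μ q|} with hB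
  have hAne : A.Nonempty := ⟨_, p₀, hp₀, q₀, hq₀, rfl⟩
  have hBne : B.Nonempty := ⟨_, (0 : K → ℝ), q₀, hq₀, rfl⟩
  have hAbdd : BddAbove A := by
    refine ⟨C₁ + C₂, ?_⟩
    rintro x ⟨p, hp, q, hq, rfl⟩
    calc |V₁ p q - V₂ p q| ≤ |V₁ p q| + |V₂ p q| := abs_sub _ _
      _ ≤ C₁ + C₂ := add_le_add (hC₁ p q) (hC₂ p q)
  -- pointwise: dual differences are bounded by primal differences
  have key : ∀ (μ : K → ℝ), ∀ q ∈ stdSimplex ℝ L, ∃ p₁ ∈ stdSimplex ℝ K, ∃ p₂ ∈ stdSimplex ℝ K,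
      Vd₁ μ q - Vd₂ μ q ≤ V₁ p₁ q - V₂ p₁ q ∧ Vd₂ μ q - Vd₁ μ q ≤ V₂ p₂ q - V₁ p₂ q := by
    intro μ q hq
    obtain ⟨p₁, hp₁, he₁⟩ := (hmax₁ μ q hq).1
    obtain ⟨p₂, hp₂, he₂⟩ := (hmax₂ μ q hq).1
    refine ⟨p₁, hp₁, p₂, hp₂, ?_, ?_⟩
    · have h := (hmax₂ μ q hq).2 ⟨p₁, hp₁, rfl⟩
      rw [he₁]; linarith
    · have h := (hmax₁ μ q hq).2 ⟨p₂, hp₂, rfl⟩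
      rw [he₂]; linarith
  have hBbdd : BddAbove B := by
    refine ⟨C₁ + C₂, ?_⟩
    rintro x ⟨μ, q, hq, rfl⟩
    obtain ⟨p₁, hp₁, p₂, hp₂, h1, h2⟩ := key μ q hq
    rw [abs_sub_le_iff]
    constructor
    · calc Vd₁ μ q - Vd₂ μ q ≤ V₁ p₁ q - V₂ p₁ q := h1
        _ ≤ |V₁ p₁ q| + |V₂ p₁ q| := (le_abs_self _).trans (abs_sub _ _)
        _ ≤ C₁ + C₂ := add_le_add (hC₁ p₁ q) (hC₂ p₁ q)
    · calc Vd₂ μ q - Vd₁ μ q ≤ V₂ p₂ q - V₁ p₂ q := h2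
        _ ≤ |V₂ p₂ q| + |V₁ p₂ q| := (le_abs_self _).trans (abs_sub _ _)
        _ ≤ C₁ + C₂ := by
            have := add_le_add (hC₂ p₂ q) (hC₁ p₂ q); linarith
  refine le_antisymm ?_ ?_
  · refine csSup_le hAne ?_
    rintro x ⟨p, hp, q, hq, rfl⟩
    rw [abs_sub_le_iff]
    obtain ⟨μ₁, he₁⟩ := (hmin₁ p hp q hq).1
    obtain ⟨μ₂, he₂⟩ := (hmin₂ p hp q hq).1
    constructor
    · have h := (hmin₁ p hp q hq).2 ⟨μ₂, rfl⟩
      have hle : V₁ p q - V₂ p q ≤ |Vd₁ μ₂ q - Vd₂ μ₂ q| := by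
        have : V₁ p q - V₂ p q ≤ Vd₁ μ₂ q - Vd₂ μ₂ q := by rw [he₂]; linarith
        exact this.trans (le_abs_self _)
      exact hle.trans (le_csSup hBbdd ⟨μ₂, q, hq, rfl⟩)
    · have h := (hmin₂ p hp q hq).2 ⟨μ₁, rfl⟩
      have hle : V₂ p q - V₁ p q ≤ |Vd₁ μ₁ q - Vd₂ μ₁ q| := by
        have : V₂ p q - V₁ p q ≤ Vd₂ μ₁ q - Vd₁ μ₁ q := by rw [he₁]; linarith
        exact this.trans ((le_abs_self _).trans (abs_sub_comm _ _).le)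
      exact hle.trans (le_csSup hBbdd ⟨μ₁, q, hq, rfl⟩)
  · refine csSup_le hBne ?_
    rintro x ⟨μ, q, hq, rfl⟩
    obtain ⟨p₁, hp₁, p₂, hp₂, h1, h2⟩ := key μ q hq
    rw [abs_sub_le_iff]
    constructor
    · exact (h1.trans (le_abs_self _)).trans (le_csSup hAbdd ⟨p₁, hp₁, q, hq, rfl⟩)
    · exact (h2.trans ((le_abs_self _).trans (abs_sub_comm _ _).le)).trans
        (le_csSup hAbdd ⟨p₂, hp₂, q, hq, rfl⟩)
end

section
/- Let λ ∈ (0,1), and let V_λ, J : Δ(K) × Δ(L) → ℝ be bounded with J ≤ V_λ pointwise. Let Ṽ²_λ, J̃² : Δ(K) × ℝ^{|L|} → ℝ satisfy, for all (p,q): V_λ(p,q) = max_{ν}(Ṽ²_λ(p,ν) − qᵀν) and J(p,q) = max_{ν}(J̃²(p,ν) − qᵀν), with maxima attained. Suppose there exists a bounded function Ṽ²_{λ,T} and a family of operators F̃²_r, each a (1−λ)-contraction in the sup-norm, such that J̃² = F̃²_σ J̃² for some index σ (pointwise, with σ possibly depending on the point), Ṽ²_{λ,T+1} := F̃²_σ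 Ṽ²_{λ,T} pointwise for the same σ, and ‖Ṽ²_λ − Ṽ²_{λ,T+1}‖_sup ≤ (1−λ)‖Ṽ²_λ − Ṽ²_{λ,T}‖_sup. Then ‖J̃² − Ṽ²_λ‖_sup ≤ (2(1−λ)/λ) ‖Ṽ²_{λ,T} − Ṽ²_λ‖_sup, and consequently ‖J − V_λ‖_sup ≤ (2(1−λ)/λ) ‖Ṽ²_{λ,T} − Ṽ²_λ‖_sup. -/
/-! The dual error `e = ‖J̃² − Ṽ²_λ‖` satisfies a self-improving bound: since `J̃²` is a fixed point
of `F̃²_σ` and `Ṽ²_{λ,T+1} = F̃²_σ Ṽ²_{λ,T}`, the triangle inequality through `Ṽ²_{λ,T+1}` gives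
`e ≤ (1 − λ)(e + D) + (1 − λ) D`, where `D` bounds the truncation error, hence `e ≤ 2(1 − λ) D / λ`.
The primal values are maxima over `ν` of the dual values minus the same linear term, so their
distance is bounded by the dual one. -/

lemma le_div_one_sub_of_forall_le_affine {α : Type*} {s : Set α} {e : α → ℝ} {a b C : ℝ}
    (ha : a < 1) (hC : ∀ x ∈ s, e x ≤ C)
    (h : ∀ B, (∀ x ∈ s, e x ≤ B) → ∀ x ∈ s, e x ≤ a * B + b) :
    ∀ x ∈ s, e x ≤ b / (1 - a) := by
  intro x hx
  have hbdd : BddAbove (e '' s) := ⟨C, Set.forall_mem_image.2 hC⟩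
  set M := sSup (e '' s)
  have hM : ∀ y ∈ s, e y ≤ M := fun y hy => le_csSup hbdd (Set.mem_image_of_mem e hy)
  have hMM : M ≤ a * M + b :=
    csSup_le ⟨e x, Set.mem_image_of_mem e hx⟩ (Set.forall_mem_image.2 (h M hM))
  calc e x ≤ M := hM x hx
    _ ≤ b / (1 - a) := by rw [le_div_iff₀ (by linarith)]; linarith

lemma abs_sub_le_of_isGreatest_range {α : Type*} {u v : α → ℝ} {a b c : ℝ}
    (ha : IsGreatest (Set.range u) a) (hb : IsGreatest (Set.range v) b)
    (huv : ∀ x, |u x - v x| ≤ c) : |a - b| ≤ c := by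
  obtain ⟨⟨x, rfl⟩, hx⟩ := ha
  obtain ⟨⟨y, rfl⟩, hy⟩ := hb
  have hux : u y ≤ u x := hx ⟨y, rfl⟩
  have hvy : v x ≤ v y := hy ⟨x, rfl⟩
  have hx' := abs_le.1 (huv x)
  have hy' := abs_le.1 (huv y)
  rw [abs_le]
  constructor <;> linarith

theorem stmt_8_general {K L ι : Type*} [Fintype K] [Fintype L]
    (lam : ℝ) (hlam : lam ∈ Set.Ioo (0:ℝ) 1)
    (V J : (K → ℝ) → (L → ℝ) → ℝ)
    (Vd Jd : (K → ℝ) → (L → ℝ) → ℝ)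
    (hVd : ∀ p ∈ stdSimplex ℝ K, ∀ q ∈ stdSimplex ℝ L,
      IsGreatest {x : ℝ | ∃ ν : L → ℝ, x = Vd p ν - ∑ l, q l * ν l} (V p q))
    (hJd : ∀ p ∈ stdSimplex ℝ K, ∀ q ∈ stdSimplex ℝ L,
      IsGreatest {x : ℝ | ∃ ν : L → ℝ, x = Jd p ν - ∑ l, q l * ν l} (J p q))
    (F : ι → ((K → ℝ) → (L → ℝ) → ℝ) → (K → ℝ) → (L → ℝ) → ℝ)
    (hFcontr : ∀ (r : ι) (W₁ W₂ : (K → ℝ) → (L → ℝ) → ℝ) (D : ℝ),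
      (∀ p ∈ stdSimplex ℝ K, ∀ (ν : L → ℝ), |W₁ p ν - W₂ p ν| ≤ D) →
      ∀ p ∈ stdSimplex ℝ K, ∀ (ν : L → ℝ), |F r W₁ p ν - F r W₂ p ν| ≤ (1 - lam) * D)
    (σ : (K → ℝ) → (L → ℝ) → ι)
    (hJfix : ∀ p ∈ stdSimplex ℝ K, ∀ (ν : L → ℝ), Jd p ν = F (σ p ν) Jd p ν)
    (VT VT1 : (K → ℝ) → (L → ℝ) → ℝ)
    (hJdb : ∃ C : ℝ, ∀ p ∈ stdSimplex ℝ K, ∀ (ν : L → ℝ), |Jd p ν - Vd p ν| ≤ C)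
    (hVT1 : ∀ p ∈ stdSimplex ℝ K, ∀ (ν : L → ℝ), VT1 p ν = F (σ p ν) VT p ν)
    (hstep : ∀ D : ℝ, (∀ p ∈ stdSimplex ℝ K, ∀ (ν : L → ℝ), |Vd p ν - VT p ν| ≤ D) →
      ∀ p ∈ stdSimplex ℝ K, ∀ (ν : L → ℝ), |Vd p ν - VT1 p ν| ≤ (1 - lam) * D) :
    ∀ D : ℝ, (∀ p ∈ stdSimplex ℝ K, ∀ (ν : L → ℝ), |VT p ν - Vd p ν| ≤ D) →
      (∀ p ∈ stdSimplex ℝ K, ∀ (ν : L → ℝ),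
        |Jd p ν - Vd p ν| ≤ 2 * (1 - lam) / lam * D) ∧
      (∀ p ∈ stdSimplex ℝ K, ∀ q ∈ stdSimplex ℝ L,
        |J p q - V p q| ≤ 2 * (1 - lam) / lam * D) := by
  intro D hD
  obtain ⟨hlam0, -⟩ := hlam
  obtain ⟨C, hC⟩ := hJdb
  have hVT : ∀ p ∈ stdSimplex ℝ K, ∀ ν, |Vd p ν - VT p ν| ≤ D := fun p hp ν => by
    rw [abs_sub_comm]; exact hD p hp ν
  have hbootstrap : ∀ B, (∀ p ∈ stdSimplex ℝ K, ∀ ν, |Jd p ν - Vd p ν| ≤ B) →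
      ∀ p ∈ stdSimplex ℝ K, ∀ ν, |Jd p ν - Vd p ν| ≤ (1 - lam) * B + 2 * (1 - lam) * D := by
    intro B hB p hp ν
    have hJVT : ∀ p ∈ stdSimplex ℝ K, ∀ ν, |Jd p ν - VT p ν| ≤ B + D := fun p hp ν =>
      (abs_sub_le _ _ _).trans (add_le_add (hB p hp ν) (hVT p hp ν))
    have hJVT1 := hFcontr (σ p ν) Jd VT _ hJVT p hp ν
    rw [← hJfix p hp ν, ← hVT1 p hp ν] at hJVT1
    linarith [abs_sub_le (Jd p ν) (VT1 p ν) (Vd p ν), abs_sub_comm (VT1 p ν) (Vd p ν),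
      hstep D hVT p hp ν]
  have hdual : ∀ p ∈ stdSimplex ℝ K, ∀ ν, |Jd p ν - Vd p ν| ≤ 2 * (1 - lam) / lam * D := by
    have := le_div_one_sub_of_forall_le_affine (s := stdSimplex ℝ K ×ˢ Set.univ)
      (e := fun x => |Jd x.1 x.2 - Vd x.1 x.2|) (by linarith : 1 - lam < 1)
      (fun x hx => hC x.1 hx.1 x.2) (fun B hB x hx =>
        hbootstrap B (fun p hp ν => hB (p, ν) ⟨hp, trivial⟩) x.1 hx.1 x.2)
    intro p hp ν
    convert this (p, ν) ⟨hp, trivial⟩ using 1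
    rw [sub_sub_cancel]
    ring
  refine ⟨hdual, fun p hp q hq => ?_⟩
  have hrange : ∀ f : (L → ℝ) → ℝ, {x | ∃ ν, x = f ν} = Set.range f := fun f =>
    Set.ext fun _ => exists_congr fun _ => eq_comm
  refine abs_sub_le_of_isGreatest_range (hrange _ ▸ hJd p hp q hq) (hrange _ ▸ hVd p hp q hq)
    fun ν => ?_
  simpa only [sub_sub_sub_cancel_right] using hdual p hp ν

/-- abstract Theorem 8: performance bound for the approximated security
strategy derived from the truncated dual value. -/
theorem stmt_8 {K L ι : Type*} [Fintype K] [Fintype L] [Nonempty K] [Nonempty L] [Nonempty ι]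
    (lam : ℝ) (hlam : lam ∈ Set.Ioo (0:ℝ) 1)
    (V J : (K → ℝ) → (L → ℝ) → ℝ)
    (hVb : ∃ C : ℝ, ∀ p q, |V p q| ≤ C) (hJb : ∃ C : ℝ, ∀ p q, |J p q| ≤ C)
    (hJV : ∀ p ∈ stdSimplex ℝ K, ∀ q ∈ stdSimplex ℝ L, J p q ≤ V p q)
    (Vd Jd : (K → ℝ) → (L → ℝ) → ℝ)
    (hVd : ∀ p ∈ stdSimplex ℝ K, ∀ q ∈ stdSimplex ℝ L,
      IsGreatest {x : ℝ | ∃ ν : L → ℝ, x = Vd p ν - ∑ l, q l * ν l} (V p q))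
    (hJd : ∀ p ∈ stdSimplex ℝ K, ∀ q ∈ stdSimplex ℝ L,
      IsGreatest {x : ℝ | ∃ ν : L → ℝ, x = Jd p ν - ∑ l, q l * ν l} (J p q))
    (F : ι → ((K → ℝ) → (L → ℝ) → ℝ) → (K → ℝ) → (L → ℝ) → ℝ)
    (hFcontr : ∀ (r : ι) (W₁ W₂ : (K → ℝ) → (L → ℝ) → ℝ) (D : ℝ),
      (∀ p ∈ stdSimplex ℝ K, ∀ (ν : L → ℝ), |W₁ p ν - W₂ p ν| ≤ D) →
      ∀ p ∈ stdSimplex ℝ K, ∀ (ν : L → ℝ), |F r W₁ p ν - F r W₂ p ν| ≤ (1 - lam) * D)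
    (σ : (K → ℝ) → (L → ℝ) → ι)
    (hJfix : ∀ p ∈ stdSimplex ℝ K, ∀ (ν : L → ℝ), Jd p ν = F (σ p ν) Jd p ν)
    (VT VT1 : (K → ℝ) → (L → ℝ) → ℝ)
    (hVTb : ∃ C : ℝ, ∀ p ∈ stdSimplex ℝ K, ∀ (ν : L → ℝ), |Vd p ν - VT p ν| ≤ C)
    (hJdb : ∃ C : ℝ, ∀ p ∈ stdSimplex ℝ K, ∀ (ν : L → ℝ), |Jd p ν - Vd p ν| ≤ C)
    (hVT1 : ∀ p ∈ stdSimplex ℝ K, ∀ (ν : L → ℝ), VT1 p ν = F (σ p ν) VT p ν)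
    (hstep : ∀ D : ℝ, (∀ p ∈ stdSimplex ℝ K, ∀ (ν : L → ℝ), |Vd p ν - VT p ν| ≤ D) →
      ∀ p ∈ stdSimplex ℝ K, ∀ (ν : L → ℝ), |Vd p ν - VT1 p ν| ≤ (1 - lam) * D) :
    ∀ D : ℝ, (∀ p ∈ stdSimplex ℝ K, ∀ (ν : L → ℝ), |VT p ν - Vd p ν| ≤ D) →
      (∀ p ∈ stdSimplex ℝ K, ∀ (ν : L → ℝ),
        |Jd p ν - Vd p ν| ≤ 2 * (1 - lam) / lam * D) ∧
      (∀ p ∈ stdSimplex ℝ K, ∀ q ∈ stdSimplex ℝ L,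
        |J p q - V p q| ≤ 2 * (1 - lam) / lam * D) :=
  stmt_8_general lam hlam V J Vd Jd hVd hJd F hFcontr σ hJfix VT VT1 hJdb hVT1 hstep
end

section
/- Let T ≥ 1, and suppose u : {0,...,T} × histories → ℝ satisfies the backward recursion u_{t}(h) = min_{τ ∈ Δ(B)} (c_h + 𝟙ᵀ u_{t+1}(h,·)) τ for appropriate vectors c_h, with u_T ≡ 0. Then u_0 equals the optimal value of the linear program: maximize u₀ subject to the stacked constraints c_h + u_{t+1}(h,·)ᵀ𝟙 ≥ u_t(h')𝟙 for all consecutive history pairs (h', h) and all t, over free variables u_t(h) ∈ ℝ. In other words, nesting the LP duals of each one-step min over Δ(B) into a single LP (by relaxing each inner value to an inequality-constrained free variable) yields the same optimal value as the sequential backward recursion. -/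
open Finset

/-- abstract proof of Theorem 1: nesting the LP duals of each one-step
minimization over Δ(B) into a single LP yields the same optimal value as the
sequential backward recursion. Histories of length t are lists of actions in B. -/
theorem stmt_17 {B : Type*} [Fintype B] [Nonempty B]
    (T : ℕ) (hT : 1 ≤ T)
    (c : List B → B → ℝ)
    (u : List B → ℝ)
    (huT : ∀ h : List B, h.length = T → u h = 0)
    (hurec : ∀ h : List B, h.length < T →
      IsLeast {x : ℝ | ∃ τ ∈ stdSimplex ℝ B,
        x = ∑ b, τ b * (c h b + u (h ++ [b]))} (u h)) :
    IsGreatest {x : ℝ | ∃ v : List B → ℝ,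
      ((∀ h : List B, h.length = T → v h = 0) ∧
       (∀ (h : List B) (b : B), h.length < T → v h ≤ c h b + v (h ++ [b]))) ∧
      x = v []} (u []) := by
  classical
  constructor
  · refine ⟨u, ⟨huT, ?_⟩, rfl⟩
    intro h b hlen
    have := (hurec h hlen).2
    have hmem : (c h b + u (h ++ [b])) ∈ {x : ℝ | ∃ τ ∈ stdSimplex ℝ B,
        x = ∑ b', τ b' * (c h b' + u (h ++ [b']))} := by
      refine ⟨fun b' => if b' = b then 1 else 0, ⟨fun b' => by positivity, by simp⟩, ?_⟩
      rw [Finset.sum_eq_single b]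
      · simp
      · intro b' _ hb'; simp [hb']
      · intro hb; exact absurd (Finset.mem_univ b) hb
    exact this hmem
  · rintro x ⟨v, ⟨hvT, hvrec⟩, rfl⟩
    have key : ∀ k : ℕ, ∀ h : List B, h.length + k = T → v h ≤ u h := by
      intro k
      induction k with
      | zero => intro h hh; rw [huT h (by simpa using hh), hvT h (by simpa using hh)]
      | succ k ih =>
        intro h hh
        have hlen : h.length < T := by omega
        obtain ⟨⟨τ, hτ, hτeq⟩, -⟩ := hurec h hlen
        have h1 : ∀ b, v h ≤ c h b + u (h ++ [b]) := by
          intro b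
          have := ih (h ++ [b]) (by simp; omega)
          have := hvrec h b hlen
          linarith
        calc v h = ∑ b, τ b * v h := by rw [← Finset.sum_mul, hτ.2, one_mul]
          _ ≤ ∑ b, τ b * (c h b + u (h ++ [b])) :=
              Finset.sum_le_sum fun b _ => mul_le_mul_of_nonneg_left (h1 b) (hτ.1 b)
          _ = u h := hτeq.symm
    exact key T [] (by simp)
end
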